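/- arXiv:0707.0230 — 4 statements merged into one kernel-verified Lean document; each statement's English description precedes it below -/
import Mathlib

section
/- Under the stated hypotheses, the infimum over all continuous functions y : [−h, 0] → ℝⁿ of ∫_{−h}^{0} f(t, y(t)) dt equals ∫_{−h}^{0} inf_{x ∈ ℝⁿ} f(t, x) dt. -/
/-!
Pointwise `f t (z t) ≤ f t (y t)`, so `∫ f(t, z t)` is a lower bound. Conversely, the bad set `H`
is null, so it has an open neighbourhood `U` of arbitrarily small measure. By Tietze, `z` restricted
to the closed set `[-h, 0] \ U` extends to a continuous `y` with the same sup-norm bound `R`; the two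
integrands then differ only on `U`, where both are bounded by the bound `M` of `f` on
`[-h, 0] × closedBall 0 R`, so the integrals differ by at most `2 M |U|`.
-/

open Set MeasureTheory Bornology

theorem exists_continuous_eqOn_norm_le {X E : Type*} [TopologicalSpace X] [NormalSpace X]
    [NormedAddCommGroup E] [NormedSpace ℝ E] [FiniteDimensional ℝ E] {K : Set X}
    (hK : IsClosed K) {z : X → E} (hz : ContinuousOn z K) {R : ℝ} (hR : 0 ≤ R)
    (hzR : ∀ x ∈ K, ‖z x‖ ≤ R) :
    ∃ y : X → E, Continuous y ∧ (∀ x, ‖y x‖ ≤ R) ∧ EqOn y z K := by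
  let z' := BoundedContinuousFunction.ofNormedAddCommGroup (K.domRestrict z) hz.domRestrict R
    fun x => hzR x x.2
  obtain ⟨y, hy_norm, hy_restrict⟩ :=
    BoundedContinuousFunction.exists_norm_eq_domRestrict_eq hK ℝ z'
  refine ⟨y, y.continuous, fun x => ?_, fun x hx => ?_⟩
  · exact (y.norm_coe_le_norm x).trans (hy_norm ▸ (z'.norm_le hR).2 fun x => hzR x x.2)
  · exact DFunLike.congr_fun hy_restrict ⟨x, hx⟩

theorem integrableOn_of_continuousOn_diff_of_isBounded_image {α E : Type*} [TopologicalSpace α]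
    [MeasurableSpace α] [OpensMeasurableSpace α] [NormedAddCommGroup E]
    [SecondCountableTopologyEither α E] {μ : Measure α} {g : α → E} {s H : Set α}
    (hs : MeasurableSet s) (hμs : μ s ≠ ⊤) (hH : μ H = 0) (hg : ContinuousOn g (s \ H))
    (hgb : IsBounded (g '' s)) : IntegrableOn g s μ := by
  obtain ⟨C, hC⟩ := isBounded_iff_forall_norm_le.1 hgb
  set H' := toMeasurable μ H
  have hs_ae : s \ H' =ᵐ[μ] s :=
    sdiff_ae_eq_self.2 (measure_mono_null inter_subset_right ((measure_toMeasurable H).trans hH))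
  refine Integrable.mono' (integrableOn_const hμs (C := C)) ?_ ?_
  · rw [← Measure.restrict_congr_set hs_ae]
    exact (hg.mono (sdiff_subset_sdiff_right (subset_toMeasurable μ H))).aestronglyMeasurable
      (hs.diff (measurableSet_toMeasurable μ H))
  · exact (ae_restrict_iff' hs).2 (.of_forall fun t ht => hC _ (mem_image_of_mem g ht))

theorem setIntegral_le_add_of_eqOn_diff {α : Type*} [MeasurableSpace α] {μ : Measure α}
    {u v : α → ℝ} {s U : Set α} (hU : MeasurableSet U) (hsU : μ (s ∩ U) < ⊤)
    (hu : IntegrableOn u s μ) (hv : IntegrableOn v s μ) (huv : EqOn u v (s \ U)) {C : ℝ}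
    (hC : ∀ t ∈ s, |u t - v t| ≤ C) :
    ∫ t in s, u t ∂μ ≤ ∫ t in s, v t ∂μ + C * μ.real (s ∩ U) := by
  have h_out : ∫ t in s \ U, u t - v t ∂μ = 0 :=
    setIntegral_eq_zero_of_forall_eq_zero fun t ht => sub_eq_zero.2 (huv ht)
  have h_in : ∫ t in s ∩ U, u t - v t ∂μ ≤ C * μ.real (s ∩ U) :=
    (Real.le_norm_self _).trans <| norm_setIntegral_le_of_norm_le_const hsU fun t ht => hC t ht.1
  have h_split := integral_inter_add_sdiff (f := fun t => u t - v t) hU (hu.sub hv)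
  rw [h_out, add_zero, integral_sub hu hv] at h_split
  linarith

section Approximation

variable {E : Type*} [NormedAddCommGroup E] {f : ℝ → E → ℝ} {s H : Set ℝ}

theorem integrableOn_comp_of_isBounded_image (hs : IsCompact s) (hH : volume H = 0)
    (hf : ContinuousOn (fun p : ℝ × E => f p.1 p.2) ((s \ H) ×ˢ univ))
    (hbdd : ∀ X : Set E, IsBounded X → IsBounded ((fun p : ℝ × E => f p.1 p.2) '' (s ×ˢ X)))
    {w : ℝ → E} (hw : ContinuousOn w (s \ H)) (hwb : IsBounded (w '' s)) :
    IntegrableOn (fun t => f t (w t)) s := by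
  refine integrableOn_of_continuousOn_diff_of_isBounded_image hs.measurableSet
    hs.measure_lt_top.ne hH ?_ ((hbdd _ hwb).subset ?_)
  · exact hf.comp (continuousOn_id.prodMk hw) fun t ht => ⟨ht, mem_univ _⟩
  · rintro _ ⟨t, ht, rfl⟩
    exact ⟨(t, w t), ⟨ht, mem_image_of_mem w ht⟩, rfl⟩

variable [NormedSpace ℝ E] [FiniteDimensional ℝ E]

theorem exists_continuous_setIntegral_comp_lt_add (hs : IsCompact s) (hH : volume H = 0)
    (hf : ContinuousOn (fun p : ℝ × E => f p.1 p.2) ((s \ H) ×ˢ univ))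
    (hbdd : ∀ X : Set E, IsBounded X → IsBounded ((fun p : ℝ × E => f p.1 p.2) '' (s ×ˢ X)))
    {z : ℝ → E} (hzb : IsBounded (z '' s)) (hzc : ContinuousOn z (s \ H)) {ε : ℝ} (hε : 0 < ε) :
    ∃ y : ℝ → E, Continuous y ∧ ∫ t in s, f t (y t) < (∫ t in s, f t (z t)) + ε := by
  obtain ⟨R, hR, hzR⟩ := hzb.exists_pos_norm_le
  obtain ⟨M, hM, hfM⟩ := (hbdd _ (Metric.isBounded_closedBall (x := 0) (r := R))).exists_pos_norm_le
  have hfM' : ∀ t ∈ s, ∀ x, ‖x‖ ≤ R → |f t x| ≤ M := fun t ht x hx =>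
    hfM _ ⟨(t, x), ⟨ht, mem_closedBall_zero_iff.2 hx⟩, rfl⟩
  obtain ⟨U, hHU, hU, hUε⟩ := exists_isOpen_lt_of_lt H (ENNReal.ofReal (ε / (2 * M)))
    (by rw [hH]; exact ENNReal.ofReal_pos.2 (by positivity))
  obtain ⟨y, hy, hyR, hyz⟩ := exists_continuous_eqOn_norm_le (hs.isClosed.sdiff hU)
    (hzc.mono (sdiff_subset_sdiff_right hHU)) hR.le fun t ht => hzR _ (mem_image_of_mem z ht.1)
  refine ⟨y, hy, ?_⟩
  have hUs : volume.real (s ∩ U) < ε / (2 * M) :=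
    ENNReal.toReal_lt_of_lt_ofReal ((measure_mono inter_subset_right).trans_lt hUε)
  calc ∫ t in s, f t (y t)
      ≤ (∫ t in s, f t (z t)) + 2 * M * volume.real (s ∩ U) := by
        refine setIntegral_le_add_of_eqOn_diff (C := 2 * M) hU.measurableSet
          ((measure_mono inter_subset_left).trans_lt hs.measure_lt_top)
          (integrableOn_comp_of_isBounded_image hs hH hf hbdd hy.continuousOn
            (hs.image hy).isBounded)
          (integrableOn_comp_of_isBounded_image hs hH hf hbdd hzc hzb)
          (fun t ht => by simp only [hyz ht]) fun t ht => ?_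
        have := abs_sub (f t (y t)) (f t (z t))
        linarith [hfM' t ht _ (hyR t), hfM' t ht _ (hzR _ (mem_image_of_mem z ht))]
    _ < (∫ t in s, f t (z t)) + ε := by
        rw [lt_div_iff₀' (by positivity)] at hUs
        linarith

end Approximation

theorem statement1_general (n : ℕ) (h : ℝ) (hh : 0 < h) (H : Finset ℝ)
    (f : ℝ → (Fin n → ℝ) → ℝ)
    (hf : ContinuousOn (fun p : ℝ × (Fin n → ℝ) => f p.1 p.2)
      ((Set.Icc (-h) 0 \ (↑H : Set ℝ)) ×ˢ (Set.univ : Set (Fin n → ℝ))))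
    (z : ℝ → Fin n → ℝ)
    (hzb : Bornology.IsBounded (z '' Set.Icc (-h) 0))
    (hzc : ContinuousOn z (Set.Icc (-h) 0 \ (↑H : Set ℝ)))
    (hzmin : ∀ t ∈ Set.Icc (-h) 0, IsGLB (Set.range (f t)) (f t (z t)))
    (hbdd : ∀ X : Set (Fin n → ℝ), Bornology.IsBounded X →
      Bornology.IsBounded ((fun p : ℝ × (Fin n → ℝ) => f p.1 p.2) '' (Set.Icc (-h) 0 ×ˢ X))) :
    sInf {v : ℝ | ∃ y : ℝ → Fin n → ℝ, ContinuousOn y (Set.Icc (-h) 0) ∧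
        v = ∫ t in (-h)..0, f t (y t)} = ∫ t in (-h)..0, ⨅ x : Fin n → ℝ, f t x := by
  have hH : volume (H : Set ℝ) = 0 := H.finite_toSet.measure_zero volume
  have hint := fun {w} => integrableOn_comp_of_isBounded_image (w := w) isCompact_Icc hH hf hbdd
  simp_rw [intervalIntegral.integral_of_le (neg_nonpos.2 hh.le), ← integral_Icc_eq_integral_Ioc]
  rw [setIntegral_congr_fun measurableSet_Icc fun t ht => (hzmin t ht).ciInf_eq]
  refine IsGLB.csInf_eq ⟨?_, fun r hr => le_of_forall_pos_le_add fun ε hε => ?_⟩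
    ⟨_, fun _ => 0, continuousOn_const, rfl⟩
  · rintro _ ⟨y, hy, rfl⟩
    exact setIntegral_mono_on (hint hzc hzb) (hint (hy.mono sdiff_subset)
      (isCompact_Icc.image_of_continuousOn hy).isBounded) measurableSet_Icc
      fun t ht => (hzmin t ht).1 ⟨y t, rfl⟩
  · obtain ⟨y, hy, hyε⟩ :=
      exists_continuous_setIntegral_comp_lt_add isCompact_Icc hH hf hbdd hzb hzc hε
    exact (hr ⟨y, hy.continuousOn, rfl⟩).trans hyε.le

/-- Let `h > 0`, let `H` be a finite subset of `[-h,0]` and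
`Hᶜ = [-h,0] \ H`.  Let `f : [-h,0] × ℝⁿ → ℝ` be continuous on `Hᶜ × ℝⁿ`.  Assume there is a
bounded function `z : [-h,0] → ℝⁿ`, continuous on `Hᶜ`, with `f (t, z t) = inf_x f (t, x)`
for all `t ∈ [-h,0]`, and that `f` maps `[-h,0] × X` to a bounded set whenever `X` is bounded.
Then the infimum over all continuous `y : [-h,0] → ℝⁿ` of `∫_{-h}^0 f (t, y t) dt` equals
`∫_{-h}^0 inf_x f (t, x) dt`. -/
theorem statement1 (n : ℕ) (h : ℝ) (hh : 0 < h) (H : Finset ℝ)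
    (hH : (↑H : Set ℝ) ⊆ Set.Icc (-h) 0)
    (f : ℝ → (Fin n → ℝ) → ℝ)
    (hf : ContinuousOn (fun p : ℝ × (Fin n → ℝ) => f p.1 p.2)
      ((Set.Icc (-h) 0 \ (↑H : Set ℝ)) ×ˢ (Set.univ : Set (Fin n → ℝ))))
    (z : ℝ → Fin n → ℝ)
    (hzb : Bornology.IsBounded (z '' Set.Icc (-h) 0))
    (hzc : ContinuousOn z (Set.Icc (-h) 0 \ (↑H : Set ℝ)))
    (hzmin : ∀ t ∈ Set.Icc (-h) 0, IsGLB (Set.range (f t)) (f t (z t)))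
    (hbdd : ∀ X : Set (Fin n → ℝ), Bornology.IsBounded X →
      Bornology.IsBounded ((fun p : ℝ × (Fin n → ℝ) => f p.1 p.2) '' (Set.Icc (-h) 0 ×ˢ X))) :
    sInf {v : ℝ | ∃ y : ℝ → Fin n → ℝ, ContinuousOn y (Set.Icc (-h) 0) ∧
        v = ∫ t in (-h)..0, f t (y t)} = ∫ t in (-h)..0, ⨅ x : Fin n → ℝ, f t x :=
  statement1_general n h hh H f hf z hzb hzc hzmin hbdd
end

section
/- Let h > 0 and let M : [−h, 0] → S^{m+n} be piecewise continuous, partitioned into blocks M = [[M₁₁, M₁₂], [M₂₁, M₂₂]] with M₁₁(t) ∈ S^m and M₂₂(t) ∈ S^n. Suppose there exists ε > 0 such that M₂₂(t) ⪰ ε I for all t ∈ [−h, 0]. Then the following are equivalent: (i) for every x ∈ ℝ^m and every continuous function y : [−h, 0] → ℝⁿ, ∫_{−h}^{0} [x; y(t)]ᵀ M(t) [x; y(t)] dt ≥ 0; (ii) there exists a piecewise continuous function T : [−h, 0] → S^m such that M(t) + [[T(t), 0], [0, 0]] ⪰ 0 for all t ∈ [−h, 0] and ∫_{−h}^{0}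 T(t) dt = 0. -/
open Matrix

/-- A real-valued function on `[-h,0]` is piecewise continuous if there are finitely many
points `-h < t₁ < ⋯ < t_m < 0` such that it is bounded on `[-h,0]`, continuous (within
`[-h,0]`) off these points, and has finite one-sided limits at each of them. -/
def PiecewiseCts (h : ℝ) (f : ℝ → ℝ) : Prop :=
  ∃ P : Finset ℝ, (↑P : Set ℝ) ⊆ Set.Ioo (-h) 0 ∧
    Bornology.IsBounded (f '' Set.Icc (-h) 0) ∧
    (∀ t ∈ Set.Icc (-h) 0 \ (↑P : Set ℝ), ContinuousWithinAt f (Set.Icc (-h) 0) t) ∧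
    ∀ p ∈ P, (∃ L : ℝ, Filter.Tendsto f (nhdsWithin p (Set.Iio p)) (nhds L)) ∧
      (∃ L : ℝ, Filter.Tendsto f (nhdsWithin p (Set.Ioi p)) (nhds L))

/-- The lower-right `n × n` block `M₂₂` of a matrix in `S^{m+n}`. -/
def blk22 (m n : ℕ) (M : Matrix (Fin (m + n)) (Fin (m + n)) ℝ) :
    Matrix (Fin n) (Fin n) ℝ :=
  Matrix.of fun i j => M (Fin.natAdd m i) (Fin.natAdd m j)

/-- The embedding `T ↦ [[T, 0], [0, 0]]` of `S^m` into `S^{m+n}`. -/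
def embedUL (m n : ℕ) (T : Matrix (Fin m) (Fin m) ℝ) :
    Matrix (Fin (m + n)) (Fin (m + n)) ℝ :=
  Matrix.reindex finSumFinEquiv finSumFinEquiv (Matrix.fromBlocks T 0 0 0)


/-!
Write `M(t) = [[A, B], [Bᵀ, D]]` with `D ⪰ ε I`, let `Δ = A - B D⁻¹ Bᵀ` be the Schur complement
and `G = ∫ Δ`. Completing the square gives `[x; y]ᵀ M [x; y] = xᵀ Δ x + (y - w)ᵀ D (y - w)` with
`w = -D⁻¹ Bᵀ x`. The minimiser `w` is only piecewise continuous, but continuous `y` approximate it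
in `L²`, so (i) forces `G ⪰ 0`. Then `T = G / h - Δ` has `∫ T = 0`, and `M + diag(T, 0) ⪰ 0`
because its Schur complement is `G / h`. Conversely, under (ii) the integral in (i) is at least
`-∫ xᵀ T x = 0`.
-/

open Set Filter Topology MeasureTheory Bornology

attribute [local instance] Matrix.normedAddCommGroup Matrix.normedSpace

/-- `PiecewiseCts` for functions into a metric space; for real-valued functions the two agree
definitionally. -/
def PiecewiseContinuous {E : Type*} [PseudoMetricSpace E] (h : ℝ) (f : ℝ → E) : Prop :=
  ∃ P : Finset ℝ, (↑P : Set ℝ) ⊆ Ioo (-h) 0 ∧ IsBounded (f '' Icc (-h) 0) ∧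
    (∀ t ∈ Icc (-h) 0 \ ↑P, ContinuousWithinAt f (Icc (-h) 0) t) ∧
    ∀ p ∈ P, (∃ L, Tendsto f (𝓝[<] p) (𝓝 L)) ∧ (∃ L, Tendsto f (𝓝[>] p) (𝓝 L))

namespace PiecewiseContinuous

section Metric

variable {E F : Type*} [PseudoMetricSpace E] [PseudoMetricSpace F] {h : ℝ} {f : ℝ → E}

theorem exists_tendsto (hf : PiecewiseContinuous h f) {p : ℝ} (hp : p ∈ Ioo (-h) 0) :
    (∃ L, Tendsto f (𝓝[<] p) (𝓝 L)) ∧ ∃ L, Tendsto f (𝓝[>] p) (𝓝 L) := by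
  obtain ⟨P, -, -, hcont, hlim⟩ := hf
  by_cases hpP : p ∈ P
  · exact hlim p hpP
  have hfp : ContinuousAt f p :=
    (hcont p ⟨Ioo_subset_Icc_self hp, hpP⟩).continuousAt (Icc_mem_nhds hp.1 hp.2)
  exact ⟨⟨f p, hfp.tendsto.mono_left nhdsWithin_le_nhds⟩,
    ⟨f p, hfp.tendsto.mono_left nhdsWithin_le_nhds⟩⟩

theorem mk' (P : Finset ℝ) (hP : (↑P : Set ℝ) ⊆ Ioo (-h) 0)
    (hbdd : IsBounded (f '' Icc (-h) 0))
    (hcont : ∀ t ∈ Icc (-h) 0 \ ↑P, ContinuousWithinAt f (Icc (-h) 0) t)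
    (hlim : ∀ p ∈ Ioo (-h) 0,
      (∃ L, Tendsto f (𝓝[<] p) (𝓝 L)) ∧ ∃ L, Tendsto f (𝓝[>] p) (𝓝 L)) :
    PiecewiseContinuous h f :=
  ⟨P, hP, hbdd, hcont, fun p hp => hlim p (hP hp)⟩

theorem of_continuousOn (hf : ContinuousOn f (Icc (-h) 0)) : PiecewiseContinuous h f :=
  ⟨∅, by simp, (isCompact_Icc.image_of_continuousOn hf).isBounded, fun t ht => hf t ht.1,
    by simp⟩

theorem pi {ι : Type*} [Fintype ι] {X : ι → Type*} [∀ i, PseudoMetricSpace (X i)]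
    {f : ℝ → ∀ i, X i} (hf : ∀ i, PiecewiseContinuous h fun t => f t i) :
    PiecewiseContinuous h f := by
  classical
  choose P hP hbdd hcont _ using fun i => id (hf i)
  refine mk' (Finset.univ.biUnion P) (by simpa using hP) ?_ (fun t ht => ?_) fun p hp => ?_
  · rw [← forall_isBounded_image_eval_iff]
    simpa [image_image] using hbdd
  · refine continuousWithinAt_pi.2 fun i => hcont i t ⟨ht.1, fun htP => ht.2 ?_⟩
    simpa using ⟨i, htP⟩
  · choose L hL using fun i => ((hf i).exists_tendsto hp).1
    choose R hR using fun i => ((hf i).exists_tendsto hp).2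
    exact ⟨⟨L, tendsto_pi_nhds.2 hL⟩, ⟨R, tendsto_pi_nhds.2 hR⟩⟩

theorem prodMk {g : ℝ → F} (hf : PiecewiseContinuous h f) (hg : PiecewiseContinuous h g) :
    PiecewiseContinuous h fun t => (f t, g t) := by
  classical
  obtain ⟨P, hP, hfb, hfc, -⟩ := id hf
  obtain ⟨Q, hQ, hgb, hgc, -⟩ := id hg
  refine mk' (P ∪ Q) (by simpa using ⟨hP, hQ⟩) ((hfb.prod hgb).subset ?_)
    (fun t ht => ?_) fun p hp => ?_
  · rintro _ ⟨t, ht, rfl⟩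
    exact ⟨mem_image_of_mem f ht, mem_image_of_mem g ht⟩
  · simp only [Finset.coe_union, Set.mem_sdiff, Set.mem_union, not_or] at ht
    exact (hfc t ⟨ht.1, ht.2.1⟩).prodMk (hgc t ⟨ht.1, ht.2.2⟩)
  · obtain ⟨⟨L, hL⟩, ⟨R, hR⟩⟩ := hf.exists_tendsto hp
    obtain ⟨⟨L', hL'⟩, ⟨R', hR'⟩⟩ := hg.exists_tendsto hp
    exact ⟨⟨(L, L'), hL.prodMk_nhds hL'⟩, ⟨(R, R'), hR.prodMk_nhds hR'⟩⟩

/-- Closedness of `S` keeps the one-sided limits of `f` inside `S`, where `φ` is continuous. -/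
theorem comp [ProperSpace E] (hf : PiecewiseContinuous h f) {S : Set E} (hS : IsClosed S)
    (hfS : ∀ t ∈ Icc (-h) 0, f t ∈ S) {φ : E → F} (hφ : ContinuousOn φ S) :
    PiecewiseContinuous h fun t => φ (f t) := by
  obtain ⟨P, hP, hbdd, hcont, -⟩ := id hf
  have hK : IsCompact (closure (f '' Icc (-h) 0) ∩ S) := hbdd.isCompact_closure.inter_right hS
  refine mk' P hP ((hK.image_of_continuousOn (hφ.mono inter_subset_right)).isBounded.subset ?_)
    (fun t ht => (hφ (f t) (hfS t ht.1)).comp (hcont t ht) hfS) fun p hp => ?_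
  · rintro _ ⟨t, ht, rfl⟩
    exact mem_image_of_mem φ ⟨subset_closure (mem_image_of_mem f ht), hfS t ht⟩
  have hmem : ∀ᶠ t in 𝓝[≠] p, f t ∈ S := by
    filter_upwards [nhdsWithin_le_nhds (Icc_mem_nhds hp.1 hp.2)] with t ht
    exact hfS t ht
  have hlim : ∀ (l : Filter ℝ) [l.NeBot], l ≤ 𝓝[≠] p → ∀ L, Tendsto f l (𝓝 L) →
      Tendsto (fun t => φ (f t)) l (𝓝 (φ L)) := fun l _ hl L hL =>
    (hφ L (hS.mem_of_tendsto hL (hl hmem))).tendsto.comp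
      (tendsto_nhdsWithin_iff.2 ⟨hL, hl hmem⟩)
  obtain ⟨⟨L, hL⟩, ⟨R, hR⟩⟩ := hf.exists_tendsto hp
  exact ⟨⟨_, hlim _ (nhdsWithin_mono p (by simp)) L hL⟩,
    ⟨_, hlim _ (nhdsWithin_mono p (by simp)) R hR⟩⟩

end Metric

section Normed

variable {E : Type*} [NormedAddCommGroup E] {h : ℝ} {f : ℝ → E}

theorem exists_norm_le (hf : PiecewiseContinuous h f) : ∃ C, ∀ t ∈ Icc (-h) 0, ‖f t‖ ≤ C := by
  obtain ⟨P, -, hbdd, -⟩ := hf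
  obtain ⟨C, hC⟩ := isBounded_iff_forall_norm_le.1 hbdd
  exact ⟨C, fun t ht => hC _ (mem_image_of_mem f ht)⟩

theorem aestronglyMeasurable (hf : PiecewiseContinuous h f) :
    AEStronglyMeasurable f (volume.restrict (Icc (-h) 0)) := by
  obtain ⟨P, -, -, hcont, -⟩ := hf
  rw [← Measure.restrict_congr_set (sdiff_null_ae_eq_self (P.finite_toSet.measure_zero volume))]
  exact ContinuousOn.aestronglyMeasurable (fun t ht => (hcont t ht).mono sdiff_subset)
    (measurableSet_Icc.diff P.finite_toSet.measurableSet)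

theorem memLp (hf : PiecewiseContinuous h f) (p : ENNReal) :
    MemLp f p (volume.restrict (Icc (-h) 0)) := by
  obtain ⟨C, hC⟩ := hf.exists_norm_le
  exact MemLp.of_bound hf.aestronglyMeasurable C
    ((ae_restrict_iff' measurableSet_Icc).2 (ae_of_all _ hC))

theorem intervalIntegrable (hf : PiecewiseContinuous h f) (hh : 0 ≤ h) :
    IntervalIntegrable f volume (-h) 0 :=
  (intervalIntegrable_iff_integrableOn_Icc_of_le (by linarith)).2 ((hf.memLp 1).integrable le_rfl)

end Normed

section Matrix

variable {ι κ : Type*} [Fintype ι] [Fintype κ] {h : ℝ}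

theorem matrix {Q : ℝ → Matrix ι κ ℝ} (hQ : ∀ i j, PiecewiseCts h fun t => Q t i j) :
    PiecewiseContinuous h Q :=
  .pi fun i => .pi fun j => hQ i j

theorem entry {Q : ℝ → Matrix ι κ ℝ} (hQ : PiecewiseContinuous h Q) (i : ι) (j : κ) :
    PiecewiseContinuous h fun t => Q t i j :=
  hQ.comp isClosed_univ (fun _ _ => trivial) (φ := fun N => N i j) (by fun_prop)

theorem sub {f g : ℝ → ι → ℝ} (hf : PiecewiseContinuous h f) (hg : PiecewiseContinuous h g) :
    PiecewiseContinuous h fun t => f t - g t :=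
  (hf.prodMk hg).comp isClosed_univ (fun _ _ => trivial) (φ := fun p => p.1 - p.2)
    continuous_sub.continuousOn

theorem dotProduct_mulVec {Q : ℝ → Matrix ι ι ℝ} (hQ : PiecewiseContinuous h Q)
    {v : ℝ → ι → ℝ} (hv : PiecewiseContinuous h v) :
    PiecewiseContinuous h fun t => v t ⬝ᵥ Q t *ᵥ v t :=
  (hv.prodMk hQ).comp isClosed_univ (fun _ _ => trivial)
    (φ := fun p : (ι → ℝ) × Matrix ι ι ℝ => p.1 ⬝ᵥ p.2 *ᵥ p.1) (by fun_prop)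

end Matrix

end PiecewiseContinuous

namespace Matrix

variable {ι κ : Type*}

noncomputable def schurCompl [Fintype κ] [DecidableEq κ] (N : Matrix (ι ⊕ κ) (ι ⊕ κ) ℝ) :
    Matrix ι ι ℝ :=
  N.toBlocks₁₁ - N.toBlocks₁₂ * N.toBlocks₂₂⁻¹ * N.toBlocks₂₁

namespace IsSymm

variable {N : Matrix (ι ⊕ κ) (ι ⊕ κ) ℝ}

theorem toBlocks₂₁_eq (hN : N.IsSymm) : N.toBlocks₂₁ = N.toBlocks₁₂ᴴ := by
  ext i j
  exact hN.apply (Sum.inl j) (Sum.inr i)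

theorem fromBlocks_toBlocks_eq (hN : N.IsSymm) :
    Matrix.fromBlocks N.toBlocks₁₁ N.toBlocks₁₂ N.toBlocks₁₂ᴴ N.toBlocks₂₂ = N := by
  rw [← hN.toBlocks₂₁_eq, fromBlocks_toBlocks]

theorem isHermitian_toBlocks₂₂ (hN : N.IsSymm) : N.toBlocks₂₂.IsHermitian := by
  rw [isHermitian_iff_isSymm]
  ext i j
  exact hN.apply (Sum.inr i) (Sum.inr j)

variable [Fintype κ] [DecidableEq κ]

theorem schurCompl (hN : N.IsSymm) : N.schurCompl.IsSymm := by
  rw [← isHermitian_iff_isSymm, Matrix.schurCompl, hN.toBlocks₂₁_eq,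
    ← IsHermitian.fromBlocks₂₂ _ _ hN.isHermitian_toBlocks₂₂, hN.fromBlocks_toBlocks_eq,
    isHermitian_iff_isSymm]
  exact hN

variable [Fintype ι]

theorem sumElim_dotProduct_mulVec (hN : N.IsSymm) (hD : IsUnit N.toBlocks₂₂.det)
    (x : ι → ℝ) (y : κ → ℝ) :
    Sum.elim x y ⬝ᵥ N *ᵥ Sum.elim x y =
      x ⬝ᵥ N.schurCompl *ᵥ x +
        ((N.toBlocks₂₂⁻¹ * N.toBlocks₂₁) *ᵥ x + y) ⬝ᵥ
          N.toBlocks₂₂ *ᵥ ((N.toBlocks₂₂⁻¹ * N.toBlocks₂₁) *ᵥ x + y) := by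
  let := invertibleOfIsUnitDet _ hD
  have := schur_complement_eq₂₂ N.toBlocks₁₁ N.toBlocks₁₂ x y hN.isHermitian_toBlocks₂₂
  simp only [star_trivial, hN.fromBlocks_toBlocks_eq, ← dotProduct_mulVec] at this
  rw [this, Matrix.schurCompl, hN.toBlocks₂₁_eq, add_comm]

theorem posSemidef_add_fromBlocks_iff (hN : N.IsSymm) (hD : N.toBlocks₂₂.PosDef)
    (T : Matrix ι ι ℝ) :
    (N + Matrix.fromBlocks T 0 0 0).PosSemidef ↔ (N.schurCompl + T).PosSemidef := by
  let := invertibleOfIsUnitDet _ ((isUnit_iff_isUnit_det _).1 hD.isUnit)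
  rw [← hN.fromBlocks_toBlocks_eq, fromBlocks_add, add_zero, add_zero, add_zero,
    PosDef.fromBlocks₂₂ _ _ hD, Matrix.schurCompl, toBlocks_fromBlocks₁₁, toBlocks_fromBlocks₁₂,
    toBlocks_fromBlocks₂₁, toBlocks_fromBlocks₂₂, add_sub_right_comm]

end IsSymm

theorem isClosed_setOf_posSemidef [Fintype κ] : IsClosed {A : Matrix κ κ ℝ | A.PosSemidef} := by
  simp only [posSemidef_iff_dotProduct_mulVec, ofPred_and, ofPred_forall]
  exact (isClosed_eq (by fun_prop) continuous_id).inter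
    (isClosed_iInter fun x => isClosed_le continuous_const (by fun_prop))

theorem posDef_of_posSemidef_sub_smul_one [DecidableEq κ] {C : Matrix κ κ ℝ} {ε : ℝ}
    (hC : (C - ε • 1).PosSemidef) (hε : 0 < ε) : C.PosDef := by
  simpa using PosDef.posSemidef_add hC (PosDef.one.smul hε)

variable [Fintype κ] [DecidableEq κ]

theorem continuousOn_of_inv_toBlocks₂₂ {Y : Type*} [TopologicalSpace Y]
    {Ψ : Matrix (ι ⊕ κ) (ι ⊕ κ) ℝ × Matrix κ κ ℝ → Y} (hΨ : Continuous Ψ) :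
    ContinuousOn (fun N => Ψ (N, N.toBlocks₂₂⁻¹)) {N | IsUnit N.toBlocks₂₂.det} := by
  intro N hN
  have hinv : ContinuousAt (fun N : Matrix (ι ⊕ κ) (ι ⊕ κ) ℝ => N.toBlocks₂₂⁻¹) N := by
    refine (continuousAt_matrix_inv _ ?_).comp
      (continuous_id.matrix_submatrix Sum.inr Sum.inr).continuousAt
    rw [Ring.inverse_eq_inv']
    exact continuousAt_inv₀ hN.ne_zero
  exact (hΨ.continuousAt.comp (continuousAt_id.prodMk hinv)).continuousWithinAt

theorem continuousOn_schurCompl :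
    ContinuousOn (schurCompl : Matrix (ι ⊕ κ) (ι ⊕ κ) ℝ → _) {N | IsUnit N.toBlocks₂₂.det} :=
  continuousOn_of_inv_toBlocks₂₂
    (Ψ := fun p => p.1.toBlocks₁₁ - p.1.toBlocks₁₂ * p.2 * p.1.toBlocks₂₁)
    ((continuous_fst.matrix_submatrix _ _).sub
      (((continuous_fst.matrix_submatrix _ _).matrix_mul continuous_snd).matrix_mul
        (continuous_fst.matrix_submatrix _ _)))

variable [Fintype ι]

theorem continuousOn_inv_toBlocks₂₂_mul_toBlocks₂₁_mulVec (x : ι → ℝ) :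
    ContinuousOn (fun N : Matrix (ι ⊕ κ) (ι ⊕ κ) ℝ => (N.toBlocks₂₂⁻¹ * N.toBlocks₂₁) *ᵥ x)
      {N | IsUnit N.toBlocks₂₂.det} :=
  continuousOn_of_inv_toBlocks₂₂ (Ψ := fun p => (p.2 * p.1.toBlocks₂₁) *ᵥ x)
    ((continuous_snd.matrix_mul (continuous_fst.matrix_submatrix _ _)).matrix_mulVec
      continuous_const)

end Matrix

noncomputable def entrywiseIntegral {ι κ : Type*} (a b : ℝ) (Q : ℝ → Matrix ι κ ℝ) :
    Matrix ι κ ℝ :=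
  Matrix.of fun i j => ∫ t in a..b, Q t i j

theorem isSymm_entrywiseIntegral {ι : Type*} {a b : ℝ} {Q : ℝ → Matrix ι ι ℝ}
    (hQ : ∀ t ∈ uIcc a b, (Q t).IsSymm) : (entrywiseIntegral a b Q).IsSymm := by
  ext i j
  exact intervalIntegral.integral_congr fun t ht => (hQ t ht).apply i j

section QuadraticForm

variable {ι : Type*} [Fintype ι]

theorem norm_dotProduct_le (u v : ι → ℝ) : ‖u ⬝ᵥ v‖ ≤ Fintype.card ι * (‖u‖ * ‖v‖) := by
  refine (norm_sum_le _ _).trans ?_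
  simpa using Finset.sum_le_card_nsmul Finset.univ _ _ fun i _ =>
    (norm_mul_le (u i) (v i)).trans (mul_le_mul (norm_le_pi_norm u i) (norm_le_pi_norm v i)
      (norm_nonneg _) (norm_nonneg _))

theorem norm_mulVec_le (Q : Matrix ι ι ℝ) (v : ι → ℝ) :
    ‖Q *ᵥ v‖ ≤ Fintype.card ι * (‖Q‖ * ‖v‖) :=
  (pi_norm_le_iff_of_nonneg (by positivity)).2 fun i =>
    (norm_dotProduct_le _ _).trans (by gcongr; exact norm_le_pi_norm Q i)

theorem norm_dotProduct_mulVec_le (Q : Matrix ι ι ℝ) (v : ι → ℝ) :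
    ‖v ⬝ᵥ Q *ᵥ v‖ ≤ Fintype.card ι ^ 2 * ‖Q‖ * ‖v‖ ^ 2 :=
  calc ‖v ⬝ᵥ Q *ᵥ v‖ ≤ Fintype.card ι * (‖v‖ * (Fintype.card ι * (‖Q‖ * ‖v‖))) :=
        (norm_dotProduct_le _ _).trans (by gcongr; exact norm_mulVec_le Q v)
    _ = Fintype.card ι ^ 2 * ‖Q‖ * ‖v‖ ^ 2 := by ring

theorem integral_dotProduct_mulVec {Q : ℝ → Matrix ι ι ℝ} {a b : ℝ}
    (hQ : ∀ i j, IntervalIntegrable (fun t => Q t i j) volume a b) (x : ι → ℝ) :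
    ∫ t in a..b, x ⬝ᵥ Q t *ᵥ x = x ⬝ᵥ entrywiseIntegral a b Q *ᵥ x := by
  have hij : ∀ i j, IntervalIntegrable (fun t => x i * (Q t i j * x j)) volume a b :=
    fun i j => ((hQ i j).mul_const _).const_mul _
  simp only [dotProduct, mulVec, entrywiseIntegral, Matrix.of_apply, Finset.mul_sum]
  rw [intervalIntegral.integral_finsetSum (f := fun i t => ∑ j, x i * (Q t i j * x j))
    fun i _ => by simpa only [Finset.sum_fn] using IntervalIntegrable.sum _ fun j _ => hij i j]
  refine Finset.sum_congr rfl fun i _ => ?_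
  rw [intervalIntegral.integral_finsetSum (f := fun j t => x i * (Q t i j * x j))
    fun j _ => hij i j]
  simp only [intervalIntegral.integral_const_mul, intervalIntegral.integral_mul_const]

/-- Approximate the indicator of `w` in `L²` by a continuous `y`; the integrand is at most a
constant times `‖y - w‖²` since `Q` is bounded. -/
theorem exists_continuous_integral_dotProduct_mulVec_sub_le {h : ℝ} (hh : 0 ≤ h)
    {Q : ℝ → Matrix ι ι ℝ} (hQ : PiecewiseContinuous h Q) {w : ℝ → ι → ℝ}
    (hw : PiecewiseContinuous h w) {δ : ℝ} (hδ : 0 < δ) :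
    ∃ y : ℝ → ι → ℝ, Continuous y ∧
      ∫ t in (-h)..0, (y t - w t) ⬝ᵥ Q t *ᵥ (y t - w t) ≤ δ := by
  obtain ⟨K, hK⟩ := hQ.exists_norm_le
  set c : ℝ := Fintype.card ι ^ 2 * max K 0 + 1
  have hc : 0 < c := by positivity
  set f := (Icc (-h) 0).indicator w
  have hf : MemLp f (ENNReal.ofReal 2) volume :=
    (memLp_indicator_iff_restrict measurableSet_Icc).2 (hw.memLp _)
  obtain ⟨y, -, hyδ, hy, hyLp⟩ :=
    hf.exists_hasCompactSupport_integral_rpow_sub_le two_pos (div_pos hδ hc)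
  refine ⟨y, hy, ?_⟩
  have hint : Integrable fun t => ‖f t - y t‖ ^ (2 : ℝ) := by
    simpa using (hf.sub hyLp).integrable_norm_rpow (by simp) (by simp)
  have hpt : ∀ t ∈ Icc (-h) 0,
      (y t - w t) ⬝ᵥ Q t *ᵥ (y t - w t) ≤ c * ‖f t - y t‖ ^ (2 : ℝ) := by
    intro t ht
    rw [show f t = w t from indicator_of_mem ht w, norm_sub_rev, Real.rpow_two]
    calc _ ≤ ‖(y t - w t) ⬝ᵥ Q t *ᵥ (y t - w t)‖ := Real.le_norm_self _
      _ ≤ Fintype.card ι ^ 2 * ‖Q t‖ * ‖y t - w t‖ ^ 2 := norm_dotProduct_mulVec_le _ _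
      _ ≤ c * ‖y t - w t‖ ^ 2 := by
        gcongr
        exact (mul_le_mul_of_nonneg_left ((hK t ht).trans (le_max_left K 0))
          (by positivity)).trans (le_add_of_nonneg_right zero_le_one)
  have he : IntervalIntegrable (fun t => (y t - w t) ⬝ᵥ Q t *ᵥ (y t - w t)) volume (-h) 0 :=
    (hQ.dotProduct_mulVec
      ((PiecewiseContinuous.of_continuousOn hy.continuousOn).sub hw)).intervalIntegrable hh
  calc _ ≤ ∫ t in (-h)..0, c * ‖f t - y t‖ ^ (2 : ℝ) :=
        intervalIntegral.integral_mono_on (by linarith) he (hint.const_mul c).intervalIntegrable hpt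
    _ = c * ∫ t in Ioc (-h) 0, ‖f t - y t‖ ^ (2 : ℝ) := by
        rw [intervalIntegral.integral_const_mul, intervalIntegral.integral_of_le (by linarith)]
    _ ≤ c * ∫ t, ‖f t - y t‖ ^ (2 : ℝ) :=
        mul_le_mul_of_nonneg_left
          (setIntegral_le_integral hint (ae_of_all _ fun t => by positivity)) hc.le
    _ ≤ c * (δ / c) := by gcongr
    _ = δ := by field_simp

end QuadraticForm

section Blocks

variable {m n : ℕ}

/-- Reindexing along `Fin (m + n) ≃ Fin m ⊕ Fin n` exposes the blocks `M₁₁, M₁₂, M₂₁, M₂₂`. -/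
def toSum (N : Matrix (Fin (m + n)) (Fin (m + n)) ℝ) :
    Matrix (Fin m ⊕ Fin n) (Fin m ⊕ Fin n) ℝ :=
  N.submatrix finSumFinEquiv finSumFinEquiv

theorem continuous_toSum : Continuous (toSum : Matrix (Fin (m + n)) (Fin (m + n)) ℝ → _) :=
  continuous_id.matrix_submatrix _ _

theorem toSum_add (N N' : Matrix (Fin (m + n)) (Fin (m + n)) ℝ) :
    toSum (N + N') = toSum N + toSum N' :=
  rfl

theorem isSymm_toSum {N : Matrix (Fin (m + n)) (Fin (m + n)) ℝ} (hN : N.IsSymm) :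
    (toSum N).IsSymm :=
  hN.submatrix _

theorem toSum_embedUL (T : Matrix (Fin m) (Fin m) ℝ) :
    toSum (embedUL m n T) = Matrix.fromBlocks T 0 0 0 := by
  simp [toSum, embedUL]

theorem toBlocks₂₂_toSum (N : Matrix (Fin (m + n)) (Fin (m + n)) ℝ) :
    (toSum N).toBlocks₂₂ = blk22 m n N := by
  ext i j
  simp [toSum, blk22, toBlocks₂₂]

theorem append_dotProduct_mulVec_append (N : Matrix (Fin (m + n)) (Fin (m + n)) ℝ)
    (x : Fin m → ℝ) (y : Fin n → ℝ) :
    Fin.append x y ⬝ᵥ N *ᵥ Fin.append x y = Sum.elim x y ⬝ᵥ toSum N *ᵥ Sum.elim x y := by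
  have hxy : Sum.elim x y = Fin.append x y ∘ finSumFinEquiv := Fin.append_comp_sumElim.symm
  rw [hxy, toSum, submatrix_mulVec_equiv, Function.comp_assoc, Equiv.self_comp_symm,
    Function.comp_id, comp_equiv_dotProduct_comp_equiv]

theorem append_dotProduct_embedUL_mulVec_append (T : Matrix (Fin m) (Fin m) ℝ)
    (x : Fin m → ℝ) (y : Fin n → ℝ) :
    Fin.append x y ⬝ᵥ embedUL m n T *ᵥ Fin.append x y = x ⬝ᵥ T *ᵥ x := by
  simp [append_dotProduct_mulVec_append, toSum_embedUL, fromBlocks_mulVec]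

theorem isClosed_setOf_posSemidef_blk22_sub (ε : ℝ) :
    IsClosed {N : Matrix (Fin (m + n)) (Fin (m + n)) ℝ | (blk22 m n N - ε • 1).PosSemidef} :=
  isClosed_setOf_posSemidef.preimage (by unfold blk22; fun_prop)

theorem posDef_toBlocks₂₂_toSum {ε : ℝ} {N : Matrix (Fin (m + n)) (Fin (m + n)) ℝ}
    (hN : (blk22 m n N - ε • 1).PosSemidef) (hε : 0 < ε) : (toSum N).toBlocks₂₂.PosDef := by
  rw [toBlocks₂₂_toSum]
  exact posDef_of_posSemidef_sub_smul_one hN hε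

end Blocks

section Main

variable {m n : ℕ} {h ε : ℝ} {M : ℝ → Matrix (Fin (m + n)) (Fin (m + n)) ℝ}

theorem PiecewiseContinuous.comp_toSum {Y : Type*} [PseudoMetricSpace Y]
    (hM : PiecewiseContinuous h M) (hε : 0 < ε)
    (hM22 : ∀ t ∈ Icc (-h) 0, (blk22 m n (M t) - ε • 1).PosSemidef)
    {φ : Matrix (Fin m ⊕ Fin n) (Fin m ⊕ Fin n) ℝ → Y}
    (hφ : ContinuousOn φ {N | IsUnit N.toBlocks₂₂.det}) :
    PiecewiseContinuous h fun t => φ (toSum (M t)) :=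
  hM.comp (isClosed_setOf_posSemidef_blk22_sub ε) hM22 <| hφ.comp continuous_toSum.continuousOn
    fun _ hN => (isUnit_iff_isUnit_det _).1 (posDef_toBlocks₂₂_toSum hN hε).isUnit

theorem integral_schurCompl_nonneg (hh : 0 < h) (hε : 0 < ε)
    (hMsymm : ∀ t ∈ Icc (-h) 0, (M t).IsSymm) (hM : PiecewiseContinuous h M)
    (hM22 : ∀ t ∈ Icc (-h) 0, (blk22 m n (M t) - ε • 1).PosSemidef)
    (hyp : ∀ (x : Fin m → ℝ) (y : ℝ → Fin n → ℝ), ContinuousOn y (Icc (-h) 0) →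
      0 ≤ ∫ t in (-h)..0, Fin.append x (y t) ⬝ᵥ (M t) *ᵥ Fin.append x (y t))
    (x : Fin m → ℝ) :
    0 ≤ ∫ t in (-h)..0, x ⬝ᵥ (toSum (M t)).schurCompl *ᵥ x := by
  set N := fun t => toSum (M t)
  set w := fun t => -(((N t).toBlocks₂₂⁻¹ * (N t).toBlocks₂₁) *ᵥ x)
  have hw : PiecewiseContinuous h w :=
    hM.comp_toSum hε hM22 (continuousOn_inv_toBlocks₂₂_mul_toBlocks₂₁_mulVec x).neg
  have hD : PiecewiseContinuous h fun t => (N t).toBlocks₂₂ :=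
    hM.comp_toSum hε hM22 (continuous_id.matrix_submatrix Sum.inr Sum.inr).continuousOn
  have hq : PiecewiseContinuous h fun t => x ⬝ᵥ (N t).schurCompl *ᵥ x :=
    (hM.comp_toSum hε hM22 continuousOn_schurCompl).dotProduct_mulVec
      (.of_continuousOn continuousOn_const)
  refine le_of_forall_pos_le_add fun δ hδ => ?_
  obtain ⟨y, hy, hyδ⟩ := exists_continuous_integral_dotProduct_mulVec_sub_le hh.le hD hw hδ
  have he := hD.dotProduct_mulVec ((PiecewiseContinuous.of_continuousOn hy.continuousOn).sub hw)
  have hsplit : ∀ t ∈ uIcc (-h) 0, Fin.append x (y t) ⬝ᵥ M t *ᵥ Fin.append x (y t) =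
      x ⬝ᵥ (N t).schurCompl *ᵥ x + (y t - w t) ⬝ᵥ (N t).toBlocks₂₂ *ᵥ (y t - w t) := by
    intro t ht
    rw [uIcc_of_le (by linarith)] at ht
    rw [append_dotProduct_mulVec_append, (isSymm_toSum (hMsymm t ht)).sumElim_dotProduct_mulVec
      ((isUnit_iff_isUnit_det _).1 (posDef_toBlocks₂₂_toSum (hM22 t ht) hε).isUnit),
      sub_neg_eq_add, add_comm (y t)]
  have := hyp x y hy.continuousOn
  rw [intervalIntegral.integral_congr hsplit, intervalIntegral.integral_add
    (hq.intervalIntegrable hh.le) (he.intervalIntegrable hh.le)] at this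
  linarith

theorem exists_multiplier_of_integral_nonneg (hh : 0 < h) (hε : 0 < ε)
    (hMsymm : ∀ t ∈ Icc (-h) 0, (M t).IsSymm) (hM : PiecewiseContinuous h M)
    (hM22 : ∀ t ∈ Icc (-h) 0, (blk22 m n (M t) - ε • 1).PosSemidef)
    (hyp : ∀ (x : Fin m → ℝ) (y : ℝ → Fin n → ℝ), ContinuousOn y (Icc (-h) 0) →
      0 ≤ ∫ t in (-h)..0, Fin.append x (y t) ⬝ᵥ (M t) *ᵥ Fin.append x (y t)) :
    ∃ T : ℝ → Matrix (Fin m) (Fin m) ℝ,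
      (∀ i j, PiecewiseCts h fun t => T t i j) ∧
      (∀ t ∈ Icc (-h) 0, (T t).IsSymm) ∧
      (∀ t ∈ Icc (-h) 0, (M t + embedUL m n (T t)).PosSemidef) ∧
      (∀ i j, (∫ t in (-h)..0, T t i j) = 0) := by
  set Δ := fun t => (toSum (M t)).schurCompl
  set G := entrywiseIntegral (-h) 0 Δ
  have hΔ : PiecewiseContinuous h Δ := hM.comp_toSum hε hM22 continuousOn_schurCompl
  have hΔsymm : ∀ t ∈ Icc (-h) 0, (Δ t).IsSymm := fun t ht =>
    (isSymm_toSum (hMsymm t ht)).schurCompl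
  have hGsymm : G.IsSymm := isSymm_entrywiseIntegral fun t ht =>
    hΔsymm t (by rwa [uIcc_of_le (by linarith)] at ht)
  have hG : G.PosSemidef := by
    refine posSemidef_iff_dotProduct_mulVec.2 ⟨isHermitian_iff_isSymm.2 hGsymm, fun x => ?_⟩
    rw [star_trivial, ← integral_dotProduct_mulVec fun i j =>
      (hΔ.entry i j).intervalIntegrable hh.le]
    exact integral_schurCompl_nonneg hh hε hMsymm hM hM22 hyp x
  refine ⟨fun t => h⁻¹ • G - Δ t, fun i j => ?_, fun t ht => (hGsymm.smul _).sub (hΔsymm t ht),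
    fun t ht => ?_, fun i j => ?_⟩
  · exact hΔ.comp isClosed_univ (fun _ _ => trivial) (φ := fun D => (h⁻¹ • G - D) i j)
      (by fun_prop)
  · rw [← posSemidef_submatrix_equiv finSumFinEquiv]
    change (toSum (M t + embedUL m n _)).PosSemidef
    rw [toSum_add, toSum_embedUL, (isSymm_toSum (hMsymm t ht)).posSemidef_add_fromBlocks_iff
      (posDef_toBlocks₂₂_toSum (hM22 t ht) hε), add_sub_cancel]
    exact hG.smul (inv_nonneg.2 hh.le)
  · simp only [Matrix.sub_apply, Matrix.smul_apply, smul_eq_mul]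
    rw [intervalIntegral.integral_sub intervalIntegrable_const
      ((hΔ.entry i j).intervalIntegrable hh.le), intervalIntegral.integral_const, smul_eq_mul]
    simp only [G, entrywiseIntegral, of_apply]
    field_simp
    ring

theorem integral_nonneg_of_posSemidef_add_embedUL (hh : 0 ≤ h) (hM : PiecewiseContinuous h M)
    {T : ℝ → Matrix (Fin m) (Fin m) ℝ} (hT : PiecewiseContinuous h T)
    (hpsd : ∀ t ∈ Icc (-h) 0, (M t + embedUL m n (T t)).PosSemidef)
    (hT0 : ∀ i j, (∫ t in (-h)..0, T t i j) = 0)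
    (x : Fin m → ℝ) {y : ℝ → Fin n → ℝ} (hy : ContinuousOn y (Icc (-h) 0)) :
    0 ≤ ∫ t in (-h)..0, Fin.append x (y t) ⬝ᵥ (M t) *ᵥ Fin.append x (y t) := by
  have hq := hM.dotProduct_mulVec ((PiecewiseContinuous.of_continuousOn hy).comp isClosed_univ
    (fun _ _ => trivial) (φ := Fin.append x) (by fun_prop))
  have hr := hT.dotProduct_mulVec (.of_continuousOn (continuousOn_const (c := x)))
  have hr0 : ∫ t in (-h)..0, x ⬝ᵥ T t *ᵥ x = 0 := by
    have hT0' : entrywiseIntegral (-h) 0 T = 0 := by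
      ext i j
      exact hT0 i j
    rw [integral_dotProduct_mulVec fun i j => (hT.entry i j).intervalIntegrable hh, hT0']
    simp
  have hpt : ∀ t ∈ Icc (-h) 0, 0 ≤ Fin.append x (y t) ⬝ᵥ (M t) *ᵥ Fin.append x (y t) +
      x ⬝ᵥ T t *ᵥ x := by
    intro t ht
    simpa [add_mulVec, append_dotProduct_embedUL_mulVec_append] using
      (hpsd t ht).dotProduct_mulVec_nonneg (Fin.append x (y t))
  calc 0 ≤ ∫ t in (-h)..0, (Fin.append x (y t) ⬝ᵥ (M t) *ᵥ Fin.append x (y t) +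
        x ⬝ᵥ T t *ᵥ x) := intervalIntegral.integral_nonneg (by linarith) hpt
    _ = _ := by
      rw [intervalIntegral.integral_add (hq.intervalIntegrable hh) (hr.intervalIntegrable hh),
        hr0, add_zero]

end Main

/-- Let `M : [-h,0] → S^{m+n}` be piecewise continuous with
`M₂₂(t) ⪰ ε I` for all `t`.  Then `∫_{-h}^0 [x; y(t)]ᵀ M(t) [x; y(t)] dt ≥ 0` for all
`x ∈ ℝ^m` and continuous `y : [-h,0] → ℝⁿ` iff there is a piecewise continuous
`T : [-h,0] → S^m` with `M(t) + [[T(t),0],[0,0]] ⪰ 0` for all `t ∈ [-h,0]` and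
`∫_{-h}^0 T(t) dt = 0`. -/
theorem statement3 (m n : ℕ) (h ε : ℝ) (hh : 0 < h) (hε : 0 < ε)
    (M : ℝ → Matrix (Fin (m + n)) (Fin (m + n)) ℝ)
    (hMsymm : ∀ t ∈ Set.Icc (-h) 0, (M t).IsSymm)
    (hMpc : ∀ i j, PiecewiseCts h fun t => M t i j)
    (hM22 : ∀ t ∈ Set.Icc (-h) 0,
      (blk22 m n (M t) - ε • (1 : Matrix (Fin n) (Fin n) ℝ)).PosSemidef) :
    (∀ (x : Fin m → ℝ) (y : ℝ → Fin n → ℝ), ContinuousOn y (Set.Icc (-h) 0) →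
        0 ≤ ∫ t in (-h)..0,
          Fin.append x (y t) ⬝ᵥ (M t).mulVec (Fin.append x (y t))) ↔
      ∃ T : ℝ → Matrix (Fin m) (Fin m) ℝ,
        (∀ i j, PiecewiseCts h fun t => T t i j) ∧
        (∀ t ∈ Set.Icc (-h) 0, (T t).IsSymm) ∧
        (∀ t ∈ Set.Icc (-h) 0, (M t + embedUL m n (T t)).PosSemidef) ∧
        (∀ i j, (∫ t in (-h)..0, T t i j) = 0) := by
  have hM : PiecewiseContinuous h M := .matrix hMpc
  refine ⟨exists_multiplier_of_integral_nonneg hh hε hMsymm hM hM22, ?_⟩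
  rintro ⟨T, hT, -, hpsd, hT0⟩ x y hy
  exact integral_nonneg_of_posSemidef_add_embedUL hh.le hM (.matrix hT) hpsd hT0 x hy
end

section
/- The linear map J : C([−h, 0], ℝⁿ) → ℝ^{nk(d+1)} defined by J φ = ∫_{−h}^{0} Z_{n,d}(t) φ(t) dt is surjective; that is, rank J = nk(d+1). -/
/-!
On each interval `(-h_{i+1}, -h_i)` and for each coordinate `r < n` we build a continuous
`f_{i,r}` vanishing outside that interval whose moments `∫ t^j f_{i,r}(t) dt`, `j ≤ d`, are the
prescribed entries `v (i, r, j)`, and take `φ_r = ∑_i f_{i,r}`. As `Z_{n,d}(t)` only sees the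
interval `H_i` containing `t`, and `H_i` meets the support of `f_{i',r}` only for `i' = i`, the
`(i, r, j)` entry of `J φ` is the `j`-th moment of `f_{i,r}`.

On an interval `(a, b)` the moments are matched with `f = ω P`, where
`ω t = max ((t - a) (b - t)) 0` and `P` is a polynomial of degree `≤ d`. The linear map
`P ↦ (∫ t^j ω P)_j` is given by the Gram matrix `(∫ ω t^j t^l)_{j,l}`, which is injective
because `∫ ω P² = 0` forces `P` to vanish on `(a, b)`; hence it is invertible.
-/

open Matrix

/-- Given delays `0 = h₀ < h₁ < ⋯ < h_k` (encoded by `hs : Fin (k+1) → ℝ`), the interval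
`H₁ = [-h₁, 0]` (for `i = 0`) resp. `H_{i+1} = [-h_{i+1}, -h_i)` (for `i ≥ 1`); these
partition `[-h_k, 0]`. -/
def Hint (k : ℕ) (hs : Fin (k + 1) → ℝ) (i : Fin k) : Set ℝ :=
  if (i : ℕ) = 0 then Set.Icc (-(hs i.succ)) 0
  else Set.Ico (-(hs i.succ)) (-(hs i.castSucc))

/-- `Z_{n,d}(t) = g(t) ⊗ I_n ⊗ z(t)`, where `g` is the vector of indicator functions of
the intervals `H₁, …, H_k` and `z(t) = (1, t, …, t^d)ᵀ`; a matrix of size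
`nk(d+1) × n` (rows indexed by `Fin k × ι × Fin (d+1)` with `ι ≃ Fin n`). -/
noncomputable def Zmat (k d : ℕ) (hs : Fin (k + 1) → ℝ) (ι : Type) [DecidableEq ι]
    (t : ℝ) : Matrix (Fin k × ι × Fin (d + 1)) ι ℝ :=
  Matrix.of fun p b =>
    (Hint k hs p.1).indicator (fun _ => (1 : ℝ)) t *
      (if p.2.1 = b then t ^ (p.2.2 : ℕ) else 0)

open MeasureTheory intervalIntegral Set Function

lemma eq_zero_of_eqOn_sum_mul_pow_zero {m : ℕ} {a b : ℝ} (hab : a < b) {c : Fin m → ℝ}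
    (h : EqOn (fun t => ∑ l : Fin m, c l * t ^ (l : ℕ)) 0 (Ioo a b)) : c = 0 := by
  set P : Polynomial ℝ := ∑ l : Fin m, Polynomial.monomial (l : ℕ) (c l)
  have hP : P = 0 := by
    refine Polynomial.eq_zero_of_infinite_isRoot P ((Ioo_infinite hab).mono fun t ht => ?_)
    simpa [P, Polynomial.eval_finsetSum] using h ht
  funext l
  simpa [P, Polynomial.finsetSum_coeff, Polynomial.coeff_monomial, Fin.val_inj] using
    congrArg (Polynomial.coeff · l) hP

section Moments

variable {a b : ℝ} {m : ℕ}

noncomputable def bumpWeight (a b t : ℝ) : ℝ := max ((t - a) * (b - t)) 0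

@[fun_prop]
lemma continuous_bumpWeight : Continuous (bumpWeight a b) := by
  unfold bumpWeight; fun_prop

lemma bumpWeight_nonneg (t : ℝ) : 0 ≤ bumpWeight a b t := le_max_right _ _

lemma bumpWeight_pos {t : ℝ} (ht : t ∈ Ioo a b) : 0 < bumpWeight a b t :=
  lt_max_of_lt_left (mul_pos (sub_pos.2 ht.1) (sub_pos.2 ht.2))

lemma support_bumpWeight_subset (hab : a < b) : support (bumpWeight a b) ⊆ Ioo a b := by
  intro t ht
  by_contra hnot
  refine ht (max_eq_right ?_)
  rw [mem_Ioo, not_and_or, not_lt, not_lt] at hnot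
  rcases hnot with h | h <;> nlinarith

lemma eqOn_zero_of_integral_bumpWeight_mul_sq_eq_zero (hab : a < b) {g : ℝ → ℝ}
    (hg : Continuous g) (h : ∫ t in a..b, bumpWeight a b t * g t ^ 2 = 0) :
    EqOn g 0 (Ioo a b) := by
  intro t₀ ht₀
  by_contra hne
  have hpos : (∫ _ in a..b, (0 : ℝ)) < ∫ t in a..b, bumpWeight a b t * g t ^ 2 :=
    integral_lt_integral_of_continuousOn_of_le_of_exists_lt hab continuousOn_const
      (by fun_prop) (fun t _ => mul_nonneg (bumpWeight_nonneg t) (sq_nonneg _))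
      ⟨t₀, Ioo_subset_Icc_self ht₀, mul_pos (bumpWeight_pos ht₀) (sq_pos_iff.2 hne)⟩
  simp [h] at hpos

noncomputable def momentMatrix (a b : ℝ) (m : ℕ) : Matrix (Fin m) (Fin m) ℝ :=
  Matrix.of fun j l => ∫ t in a..b, t ^ (j : ℕ) * bumpWeight a b t * t ^ (l : ℕ)

lemma momentMatrix_mulVec (c : Fin m → ℝ) (j : Fin m) :
    (momentMatrix a b m).mulVec c j =
      ∫ t in a..b, t ^ (j : ℕ) * (bumpWeight a b t * ∑ l, c l * t ^ (l : ℕ)) := by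
  simp only [Matrix.mulVec, dotProduct, momentMatrix, Matrix.of_apply, Finset.mul_sum]
  rw [intervalIntegral.integral_finsetSum fun l _ =>
    Continuous.intervalIntegrable (by fun_prop) _ _]
  refine Finset.sum_congr rfl fun l _ => ?_
  rw [← intervalIntegral.integral_mul_const]
  congr 1 with t
  ring

lemma momentMatrix_mulVec_injective (hab : a < b) :
    Injective (momentMatrix a b m).mulVec := by
  refine (injective_iff_map_eq_zero (momentMatrix a b m).mulVecLin).2 fun c hc => ?_
  set P := fun t => ∑ l : Fin m, c l * t ^ (l : ℕ)
  have hquad :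
      ∫ t in a..b, bumpWeight a b t * P t ^ 2 = c ⬝ᵥ (momentMatrix a b m).mulVec c := by
    simp only [dotProduct, momentMatrix_mulVec, ← intervalIntegral.integral_const_mul]
    rw [← intervalIntegral.integral_finsetSum fun l _ =>
      Continuous.intervalIntegrable (by fun_prop) _ _]
    congr 1 with t
    simp only [← mul_assoc, ← Finset.sum_mul]
    ring
  have hzero : ∫ t in a..b, bumpWeight a b t * P t ^ 2 = 0 := by
    rw [hquad, show (momentMatrix a b m).mulVec c = 0 from hc, dotProduct_zero]
  exact eq_zero_of_eqOn_sum_mul_pow_zero hab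
    (eqOn_zero_of_integral_bumpWeight_mul_sq_eq_zero hab (by fun_prop) hzero)

lemma exists_continuous_support_subset_Ioo_moments (hab : a < b) (w : Fin m → ℝ) :
    ∃ f : ℝ → ℝ, Continuous f ∧ support f ⊆ Ioo a b ∧
      ∀ j : Fin m, ∫ t in a..b, t ^ (j : ℕ) * f t = w j := by
  obtain ⟨c, hc⟩ := Matrix.mulVec_surjective_iff_isUnit.2
    (Matrix.mulVec_injective_iff_isUnit.1 (momentMatrix_mulVec_injective hab)) w
  refine ⟨fun t => bumpWeight a b t * ∑ l : Fin m, c l * t ^ (l : ℕ), by fun_prop,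
    (support_mul_subset_left _ _).trans (support_bumpWeight_subset hab), fun j => ?_⟩
  rw [← momentMatrix_mulVec, hc]

end Moments

section Intervals

variable {k : ℕ} {hs : Fin (k + 1) → ℝ}

lemma Ioo_subset_Hint (hs0 : hs 0 = 0) (i : Fin k) :
    Ioo (-(hs i.succ)) (-(hs i.castSucc)) ⊆ Hint k hs i := by
  unfold Hint
  split_ifs with h0
  · rw [show i.castSucc = 0 from Fin.ext h0, hs0, neg_zero]
    exact Ioo_subset_Icc_self
  · exact Ioo_subset_Ico_self

lemma Hint_subset_Icc (hs0 : hs 0 = 0) (i : Fin k) :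
    Hint k hs i ⊆ Icc (-(hs i.succ)) (-(hs i.castSucc)) := by
  unfold Hint
  split_ifs with h0
  · rw [show i.castSucc = 0 from Fin.ext h0, hs0, neg_zero]
  · exact Ico_subset_Icc_self

lemma disjoint_Icc_Ioo_of_ne (hmono : Monotone hs) {i i' : Fin k} (h : i ≠ i') :
    Disjoint (Icc (-(hs i.succ)) (-(hs i.castSucc)))
      (Ioo (-(hs i'.succ)) (-(hs i'.castSucc))) := by
  rw [Set.disjoint_left]
  rintro t ⟨ht₁, ht₂⟩ ⟨ht'₁, ht'₂⟩
  rcases h.lt_or_gt with hlt | hlt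
  · have : hs i.succ ≤ hs i'.castSucc := hmono (Fin.succ_le_castSucc_iff.2 hlt)
    linarith
  · have : hs i'.succ ≤ hs i.castSucc := hmono (Fin.succ_le_castSucc_iff.2 hlt)
    linarith

lemma indicator_Hint_mul_sum (hs0 : hs 0 = 0) (hmono : Monotone hs) (f : Fin k → ℝ → ℝ)
    (hf : ∀ i, support (f i) ⊆ Ioo (-(hs i.succ)) (-(hs i.castSucc))) (i : Fin k) (t : ℝ) :
    (Hint k hs i).indicator (fun _ => (1 : ℝ)) t * ∑ i', f i' t = f i t := by
  by_cases ht : t ∈ Hint k hs i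
  · rw [indicator_of_mem ht, one_mul, Finset.sum_eq_single i _ (by simp)]
    intro i' _ hne
    exact notMem_support.1 fun ht' =>
      (disjoint_Icc_Ioo_of_ne hmono hne.symm).notMem_of_mem_left (Hint_subset_Icc hs0 i ht)
        (hf i' ht')
  · rw [indicator_of_notMem ht, zero_mul, eq_comm]
    exact notMem_support.1 fun ht' => ht (Ioo_subset_Hint hs0 i (hf i ht'))

end Intervals

lemma Zmat_mulVec_apply {k d : ℕ} {hs : Fin (k + 1) → ℝ} {ι : Type} [Fintype ι]
    [DecidableEq ι] (t : ℝ) (x : ι → ℝ) (i : Fin k) (b : ι) (j : Fin (d + 1)) :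
    (Zmat k d hs ι t).mulVec x (i, b, j) =
      t ^ (j : ℕ) * ((Hint k hs i).indicator (fun _ => (1 : ℝ)) t * x b) := by
  simp only [mulVec, dotProduct, Zmat, of_apply, ite_mul, zero_mul, mul_ite, mul_zero,
    Finset.sum_ite_eq, Finset.mem_univ, if_true]
  ring

lemma intervalIntegral_eq_of_support_subset_Ioo {f : ℝ → ℝ} {a b α β : ℝ}
    (hf : support f ⊆ Ioo a b) (hα : α ≤ a) (hβ : b ≤ β) :
    ∫ t in α..β, f t = ∫ t in a..b, f t := by
  rw [integral_eq_integral_of_support_subset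
      (hf.trans (Ioo_subset_Ioc_self.trans (Ioc_subset_Ioc hα hβ))),
    integral_eq_integral_of_support_subset (hf.trans Ioo_subset_Ioc_self)]

theorem statement7_general (n k d : ℕ) (hs : Fin (k + 1) → ℝ)
    (hs0 : hs 0 = 0) (hmono : StrictMono hs)
    (v : Fin k × Fin n × Fin (d + 1) → ℝ) :
    ∃ φ : ℝ → Fin n → ℝ,
      ContinuousOn φ (Set.Icc (-(hs (Fin.last k))) 0) ∧
      ∀ p, (∫ t in (-(hs (Fin.last k)))..0,
        ((Zmat k d hs (Fin n) t).mulVec (φ t)) p) = v p := by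
  have hlt (i : Fin k) : -(hs i.succ) < -(hs i.castSucc) :=
    neg_lt_neg (hmono Fin.castSucc_lt_succ)
  choose f hfc hfsupp hfmom using fun q : Fin k × Fin n =>
    exists_continuous_support_subset_Ioo_moments (hlt q.1) (fun j => v (q.1, q.2, j))
  refine ⟨fun t b => ∑ i, f (i, b) t, by fun_prop, ?_⟩
  rintro ⟨i, b, j⟩
  have hleft : -(hs (Fin.last k)) ≤ -(hs i.succ) := neg_le_neg (hmono.monotone (Fin.le_last _))
  have hright : -(hs i.castSucc) ≤ 0 := by
    simpa [hs0] using hmono.monotone (Fin.zero_le i.castSucc)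
  simp only [Zmat_mulVec_apply,
    indicator_Hint_mul_sum hs0 hmono.monotone (fun i => f (i, b)) (fun i => hfsupp (i, b))]
  rw [intervalIntegral_eq_of_support_subset_Ioo
    ((support_mul_subset_right _ _).trans (hfsupp (i, b))) hleft hright]
  exact hfmom (i, b) j

/-- The linear map `J : C([-h,0], ℝⁿ) → ℝ^{nk(d+1)}`,
`J φ = ∫_{-h}^0 Z_{n,d}(t) φ(t) dt`, is surjective. -/
theorem statement7 (n k d : ℕ) (hk : 0 < k) (hs : Fin (k + 1) → ℝ)
    (hs0 : hs 0 = 0) (hmono : StrictMono hs)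
    (v : Fin k × Fin n × Fin (d + 1) → ℝ) :
    ∃ φ : ℝ → Fin n → ℝ,
      ContinuousOn φ (Set.Icc (-(hs (Fin.last k))) 0) ∧
      ∀ p, (∫ t in (-(hs (Fin.last k)))..0,
        ((Zmat k d hs (Fin n) t).mulVec (φ t)) p) = v p :=
  statement7_general n k d hs hs0 hmono v
end

section
/- A function N : [−h, 0] × [−h, 0] → ℝ^{n×n} with N(s, t) = N(t, s)ᵀ for all s, t is a binary piecewise polynomial matrix of degree at most d with respect to the partition H₁, …, H_k if and only if there exists a symmetric matrix Q ∈ S^{nk(d+1)} such that N(s, t) = Z_{n,d}(s)ᵀ Q Z_{n,d}(t) for all s, t ∈ [−h, 0]. -/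
open Matrix

/-- `N : [-h,0]² → ℝ^{n×n}` is a binary piecewise polynomial matrix of degree at most `d`
(w.r.t. the partition `H₁, …, H_k`): on each `H_i × H_j` it agrees with a matrix of
polynomials in `(s,t)` of degree at most `d` in each variable. -/
def IsBinPP (n k d : ℕ) (hs : Fin (k + 1) → ℝ)
    (N : ℝ → ℝ → Matrix (Fin n) (Fin n) ℝ) : Prop :=
  ∀ i j : Fin k, ∃ P : Matrix (Fin n) (Fin n) (MvPolynomial (Fin 2) ℝ),
    (∀ a b, (P a b).degreeOf 0 ≤ d ∧ (P a b).degreeOf 1 ≤ d) ∧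
    ∀ s ∈ Hint k hs i, ∀ t ∈ Hint k hs j, ∀ a b,
      N s t a b = MvPolynomial.eval ![s, t] (P a b)

lemma hint_lb {k : ℕ} {hs : Fin (k+1) → ℝ} {i : Fin k} {t : ℝ}
    (h : t ∈ Hint k hs i) : -(hs i.succ) ≤ t := by
  unfold Hint at h; split at h
  · exact h.1
  · exact h.1

lemma hint_ub {k : ℕ} {hs : Fin (k+1) → ℝ} {i : Fin k} {t : ℝ}
    (hi : (i : ℕ) ≠ 0) (h : t ∈ Hint k hs i) : t < -(hs i.castSucc) := by
  unfold Hint at h; rw [if_neg hi] at h; exact h.2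

lemma hint_disj' {k : ℕ} {hs : Fin (k+1) → ℝ} (hmono : StrictMono hs)
    {i j : Fin k} (hij : (i : ℕ) < (j : ℕ)) {t : ℝ} (hi : t ∈ Hint k hs i)
    (hj : t ∈ Hint k hs j) : False := by
  have hj0 : (j : ℕ) ≠ 0 := by omega
  have h1 := hint_lb hi
  have h2 := hint_ub hj0 hj
  have h3 : hs i.succ ≤ hs j.castSucc := by
    apply hmono.monotone
    simp [Fin.le_def]; omega
  linarith

lemma hint_disj {k : ℕ} {hs : Fin (k+1) → ℝ} (hmono : StrictMono hs)
    {i j : Fin k} (hij : i ≠ j) {t : ℝ} (hi : t ∈ Hint k hs i) :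
    t ∉ Hint k hs j := by
  intro hj
  rcases Nat.lt_or_ge (i : ℕ) (j : ℕ) with h | h
  · exact hint_disj' hmono h hi hj
  · have : (j : ℕ) < (i : ℕ) := by
      rcases Nat.eq_or_lt_of_le h with h' | h'
      · exact absurd (Fin.ext h'.symm) hij
      · exact h'
    exact hint_disj' hmono this hj hi

lemma hint_exists {k : ℕ} (hk : 0 < k) {hs : Fin (k+1) → ℝ} (hs0 : hs 0 = 0)
    (hmono : StrictMono hs) {t : ℝ} (ht : t ∈ Set.Icc (-(hs (Fin.last k))) 0) :
    ∃ i, t ∈ Hint k hs i := by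
  have key : ∀ m : ℕ, ∀ hm : m < k + 1, -(hs ⟨m, hm⟩) ≤ t → ∃ i, t ∈ Hint k hs i := by
    intro m
    induction m with
    | zero =>
      intro hm h0
      have h00 : (⟨0, hm⟩ : Fin (k+1)) = 0 := rfl
      have ht0 : t = 0 := le_antisymm ht.2 (by rw [h00, hs0] at h0; linarith)
      refine ⟨⟨0, hk⟩, ?_⟩
      have h1 : (0:ℝ) < hs (⟨0, hk⟩ : Fin k).succ := by
        rw [← hs0]; exact hmono (by simp [Fin.lt_def])
      simp only [Hint, if_pos rfl]
      exact ⟨by rw [ht0]; linarith, by rw [ht0]⟩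
    | succ m ih =>
      intro hm hle
      by_cases hcase : -(hs ⟨m, Nat.lt_of_succ_lt hm⟩) ≤ t
      · exact ih _ hcase
      · push_neg at hcase
        rcases Nat.eq_zero_or_pos m with rfl | hmpos
        · refine ⟨⟨0, hk⟩, ?_⟩
          simp only [Hint, if_pos rfl]
          have e1 : (⟨0, hk⟩ : Fin k).succ = ⟨1, hm⟩ := rfl
          have e0 : (⟨0, Nat.lt_of_succ_lt hm⟩ : Fin (k+1)) = 0 := rfl
          rw [e0, hs0] at hcase
          exact ⟨by rw [e1]; exact hle, by linarith⟩
        · have hmk : m < k := by omega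
          refine ⟨⟨m, hmk⟩, ?_⟩
          have hne : ((⟨m, hmk⟩ : Fin k) : ℕ) ≠ 0 := by simp; omega
          simp only [Hint, if_neg hne]
          have e1 : (⟨m, hmk⟩ : Fin k).succ = ⟨m+1, hm⟩ := rfl
          have e2 : (⟨m, hmk⟩ : Fin k).castSucc = ⟨m, Nat.lt_of_succ_lt hm⟩ := rfl
          rw [e1, e2]
          exact ⟨hle, hcase⟩
  exact key k (Nat.lt_succ_self k) ht.1

noncomputable def e2 (d : ℕ) (m m' : Fin (d+1)) : Fin 2 →₀ ℕ :=
  Finsupp.single 0 (m : ℕ) + Finsupp.single 1 (m' : ℕ)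

lemma e2_apply0 (d : ℕ) (m m' : Fin (d+1)) : e2 d m m' 0 = (m : ℕ) := by
  simp [e2, Finsupp.single_apply]

lemma e2_apply1 (d : ℕ) (m m' : Fin (d+1)) : e2 d m m' 1 = (m' : ℕ) := by
  simp [e2, Finsupp.single_apply]

lemma e2_surj {d : ℕ} (u : Fin 2 →₀ ℕ) (h0 : u 0 ≤ d) (h1 : u 1 ≤ d) :
    u = e2 d ⟨u 0, Nat.lt_succ_of_le h0⟩ ⟨u 1, Nat.lt_succ_of_le h1⟩ := by
  ext i
  fin_cases i
  · simp [e2_apply0]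
  · simp [e2_apply1]

lemma prod_e2 (d : ℕ) (m m' : Fin (d+1)) (s t : ℝ) :
    (∏ i : Fin 2, ![s, t] i ^ (e2 d m m') i) = s ^ (m:ℕ) * t ^ (m':ℕ) := by
  rw [Fin.prod_univ_two]
  simp [e2_apply0, e2_apply1]

lemma eval_repr {d : ℕ} (P : MvPolynomial (Fin 2) ℝ)
    (h0 : P.degreeOf 0 ≤ d) (h1 : P.degreeOf 1 ≤ d) (s t : ℝ) :
    MvPolynomial.eval ![s, t] P =
      ∑ m : Fin (d+1), ∑ m' : Fin (d+1),
        MvPolynomial.coeff (e2 d m m') P * (s ^ (m:ℕ) * t ^ (m':ℕ)) := by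
  rw [MvPolynomial.eval_eq']
  have hsub : P.support ⊆ Finset.image (fun p : Fin (d+1) × Fin (d+1) => e2 d p.1 p.2)
      Finset.univ := by
    intro u hu
    have hu0 : u 0 ≤ d := le_trans (MvPolynomial.monomial_le_degreeOf 0 hu) h0
    have hu1 : u 1 ≤ d := le_trans (MvPolynomial.monomial_le_degreeOf 1 hu) h1
    refine Finset.mem_image.mpr ⟨(⟨u 0, Nat.lt_succ_of_le hu0⟩, ⟨u 1, Nat.lt_succ_of_le hu1⟩),
      Finset.mem_univ _, ?_⟩
    exact (e2_surj u hu0 hu1).symm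
  rw [Finset.sum_subset hsub (fun u _ hu => by
    rw [MvPolynomial.notMem_support_iff.mp hu, zero_mul])]
  rw [Finset.sum_image (fun p _ q _ hpq => ?_)]
  · rw [Fintype.sum_prod_type]
    exact Finset.sum_congr rfl fun m _ => Finset.sum_congr rfl fun m' _ => by rw [prod_e2]
  · have e0 := congrArg (fun f : Fin 2 →₀ ℕ => f 0) hpq
    have e1 := congrArg (fun f : Fin 2 →₀ ℕ => f 1) hpq
    simp only [e2_apply0, e2_apply1] at e0 e1
    exact Prod.ext (Fin.ext e0) (Fin.ext e1)

lemma Zmat_indic {k : ℕ} {hs : Fin (k+1) → ℝ} (hmono : StrictMono hs) {t : ℝ}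
    {i0 : Fin k} (ht : t ∈ Hint k hs i0) (i : Fin k) :
    (Hint k hs i).indicator (fun _ => (1:ℝ)) t = if i = i0 then 1 else 0 := by
  by_cases h : i = i0
  · subst h; rw [Set.indicator_of_mem ht]; simp
  · rw [Set.indicator_of_notMem (fun hmem => hint_disj hmono h hmem ht), if_neg h]

lemma entry_eq {n k d : ℕ} {hs : Fin (k+1) → ℝ} (hmono : StrictMono hs)
    (Q : Matrix (Fin k × Fin n × Fin (d+1)) (Fin k × Fin n × Fin (d+1)) ℝ)
    {s t : ℝ} {i0 j0 : Fin k} (hsm : s ∈ Hint k hs i0) (htm : t ∈ Hint k hs j0)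
    (a b : Fin n) :
    ((Zmat k d hs (Fin n) s)ᵀ * Q * Zmat k d hs (Fin n) t) a b
      = ∑ m : Fin (d+1), ∑ m' : Fin (d+1),
          Q (i0,a,m) (j0,b,m') * (s^(m:ℕ) * t^(m':ℕ)) := by
  simp only [Matrix.mul_apply, Matrix.transpose_apply, Zmat, Matrix.of_apply,
    Zmat_indic hmono hsm, Zmat_indic hmono htm]
  simp [Fintype.sum_prod_type, ite_mul, mul_ite, mul_zero, zero_mul,
    Finset.sum_ite_eq, Finset.sum_ite_eq', Finset.mul_sum, Finset.sum_mul]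
  rw [Finset.sum_comm]
  exact Finset.sum_congr rfl fun m _ => Finset.sum_congr rfl fun m' _ => by ring

lemma e2_inj_iff {d : ℕ} {m1 m2 m m' : Fin (d+1)} :
    e2 d m1 m2 = e2 d m m' ↔ m1 = m ∧ m2 = m' := by
  constructor
  · intro h
    have h0 := congrArg (fun f : Fin 2 →₀ ℕ => f 0) h
    have h1 := congrArg (fun f : Fin 2 →₀ ℕ => f 1) h
    simp only [e2_apply0, e2_apply1] at h0 h1
    exact ⟨Fin.ext h0, Fin.ext h1⟩
  · rintro ⟨rfl, rfl⟩; rfl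

lemma degreeOf_monomial_le (i : Fin 2) (u : Fin 2 →₀ ℕ) (c : ℝ) :
    (MvPolynomial.monomial u c).degreeOf i ≤ u i := by
  apply MvPolynomial.degreeOf_le_iff.mpr
  intro v hv
  rw [Finset.mem_singleton.mp (MvPolynomial.support_monomial_subset hv)]

lemma deg_bound0 {d : ℕ} (c : Fin (d+1) → Fin (d+1) → ℝ) :
    (∑ m : Fin (d+1), ∑ m' : Fin (d+1),
      MvPolynomial.monomial (e2 d m m') (c m m')).degreeOf 0 ≤ d := by
  refine le_trans (MvPolynomial.degreeOf_sum_le _ _ _) (Finset.sup_le fun m _ => ?_)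
  refine le_trans (MvPolynomial.degreeOf_sum_le _ _ _) (Finset.sup_le fun m' _ => ?_)
  refine le_trans (degreeOf_monomial_le _ _ _) ?_
  rw [e2_apply0]; exact Nat.lt_succ_iff.mp m.isLt

lemma deg_bound1 {d : ℕ} (c : Fin (d+1) → Fin (d+1) → ℝ) :
    (∑ m : Fin (d+1), ∑ m' : Fin (d+1),
      MvPolynomial.monomial (e2 d m m') (c m m')).degreeOf 1 ≤ d := by
  refine le_trans (MvPolynomial.degreeOf_sum_le _ _ _) (Finset.sup_le fun m _ => ?_)
  refine le_trans (MvPolynomial.degreeOf_sum_le _ _ _) (Finset.sup_le fun m' _ => ?_)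
  refine le_trans (degreeOf_monomial_le _ _ _) ?_
  rw [e2_apply1]; exact Nat.lt_succ_iff.mp m'.isLt

lemma coeff_sum_monomial {d : ℕ} (c : Fin (d+1) → Fin (d+1) → ℝ) (m m' : Fin (d+1)) :
    MvPolynomial.coeff (e2 d m m')
      (∑ m1 : Fin (d+1), ∑ m2 : Fin (d+1),
        MvPolynomial.monomial (e2 d m1 m2) (c m1 m2)) = c m m' := by
  simp only [MvPolynomial.coeff_sum, MvPolynomial.coeff_monomial, e2_inj_iff]
  simp [Finset.sum_ite_eq, Finset.sum_ite_eq', ite_and]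

lemma hint_subset {k : ℕ} {hs : Fin (k+1) → ℝ} (hs0 : hs 0 = 0)
    (hmono : StrictMono hs) (i : Fin k) :
    Hint k hs i ⊆ Set.Icc (-(hs (Fin.last k))) 0 := by
  intro t ht
  have hls : hs i.succ ≤ hs (Fin.last k) := by
    apply hmono.monotone
    simp [Fin.le_def, Fin.last]
  constructor
  · linarith [hint_lb ht]
  · by_cases h : (i : ℕ) = 0
    · unfold Hint at ht; rw [if_pos h] at ht; exact ht.2
    · have h1 := hint_ub h ht
      have h2 : hs 0 ≤ hs i.castSucc := hmono.monotone (Fin.zero_le _)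
      rw [hs0] at h2; linarith


/-- A symmetric `N : [-h,0]² → ℝ^{n×n}` is a binary piecewise
polynomial matrix of degree at most `d` (w.r.t. the partition `H₁, …, H_k`) iff there is a
symmetric matrix `Q ∈ S^{nk(d+1)}` with `N(s,t) = Z_{n,d}(s)ᵀ Q Z_{n,d}(t)` for all
`s, t ∈ [-h,0]`. -/
theorem statement14 (n k d : ℕ) (hk : 0 < k) (hs : Fin (k + 1) → ℝ)
    (hs0 : hs 0 = 0) (hmono : StrictMono hs)
    (N : ℝ → ℝ → Matrix (Fin n) (Fin n) ℝ)
    (hNsym : ∀ s t, N s t = (N t s)ᵀ) :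
    IsBinPP n k d hs N ↔
      ∃ Q : Matrix (Fin k × Fin n × Fin (d + 1)) (Fin k × Fin n × Fin (d + 1)) ℝ,
        Q.IsSymm ∧
        ∀ s ∈ Set.Icc (-(hs (Fin.last k))) 0, ∀ t ∈ Set.Icc (-(hs (Fin.last k))) 0,
          N s t = (Zmat k d hs (Fin n) s)ᵀ * Q * Zmat k d hs (Fin n) t := by
  constructor
  · intro hBPP
    choose P hdeg heval using hBPP
    refine ⟨Matrix.of fun p q =>
      (MvPolynomial.coeff (e2 d p.2.2 q.2.2) (P p.1 q.1 p.2.1 q.2.1) +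
        MvPolynomial.coeff (e2 d q.2.2 p.2.2) (P q.1 p.1 q.2.1 p.2.1)) / 2, ?_, ?_⟩
    · show _ᵀ = _
      ext p q
      simp only [Matrix.transpose_apply, Matrix.of_apply]
      ring
    · intro s hsI t htI
      obtain ⟨i0, hi0⟩ := hint_exists hk hs0 hmono hsI
      obtain ⟨j0, hj0⟩ := hint_exists hk hs0 hmono htI
      ext a b
      rw [entry_eq hmono _ hi0 hj0]
      have hN1 : N s t a b = MvPolynomial.eval ![s, t] (P i0 j0 a b) :=
        heval i0 j0 s hi0 t hj0 a b
      have hN2 : N t s b a = MvPolynomial.eval ![t, s] (P j0 i0 b a) :=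
        heval j0 i0 t hj0 s hi0 b a
      have hsymm : N t s b a = N s t a b := by
        rw [hNsym s t]; rfl
      rw [eval_repr _ (hdeg i0 j0 a b).1 (hdeg i0 j0 a b).2] at hN1
      rw [eval_repr _ (hdeg j0 i0 b a).1 (hdeg j0 i0 b a).2] at hN2
      have hB : (∑ m : Fin (d+1), ∑ m' : Fin (d+1),
          MvPolynomial.coeff (e2 d m' m) (P j0 i0 b a) * (s^(m:ℕ) * t^(m':ℕ)))
          = ∑ m : Fin (d+1), ∑ m' : Fin (d+1),
            MvPolynomial.coeff (e2 d m m') (P j0 i0 b a) * (t^(m:ℕ) * s^(m':ℕ)) := by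
        rw [Finset.sum_comm]
        exact Finset.sum_congr rfl fun m _ => Finset.sum_congr rfl fun m' _ => by ring
      have expand : (∑ m : Fin (d+1), ∑ m' : Fin (d+1),
          ((MvPolynomial.coeff (e2 d m m') (P i0 j0 a b) +
            MvPolynomial.coeff (e2 d m' m) (P j0 i0 b a)) / 2) * (s^(m:ℕ) * t^(m':ℕ)))
          = ((∑ m : Fin (d+1), ∑ m' : Fin (d+1),
              MvPolynomial.coeff (e2 d m m') (P i0 j0 a b) * (s^(m:ℕ) * t^(m':ℕ))) +
             (∑ m : Fin (d+1), ∑ m' : Fin (d+1),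
              MvPolynomial.coeff (e2 d m' m) (P j0 i0 b a) * (s^(m:ℕ) * t^(m':ℕ)))) / 2 := by
        rw [← Finset.sum_add_distrib, Finset.sum_div]
        refine Finset.sum_congr rfl fun m _ => ?_
        rw [← Finset.sum_add_distrib, Finset.sum_div]
        refine Finset.sum_congr rfl fun m' _ => ?_
        ring
      simp only [Matrix.of_apply]
      rw [expand, ← hN1, hB, ← hN2, hsymm]
      ring
  · rintro ⟨Q, -, hQ⟩
    intro i j
    refine ⟨Matrix.of fun a b => ∑ m : Fin (d+1), ∑ m' : Fin (d+1),
      MvPolynomial.monomial (e2 d m m') (Q (i, a, m) (j, b, m')),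
      fun a b => ⟨deg_bound0 _, deg_bound1 _⟩, ?_⟩
    intro s hsm t htm a b
    have hsI := hint_subset hs0 hmono i hsm
    have htI := hint_subset hs0 hmono j htm
    rw [hQ s hsI t htI, entry_eq hmono Q hsm htm a b]
    simp only [Matrix.of_apply]
    rw [eval_repr _ (deg_bound0 _) (deg_bound1 _)]
    refine Finset.sum_congr rfl fun m _ => Finset.sum_congr rfl fun m' _ => ?_
    rw [coeff_sum_monomial]
end
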